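/- Fix observed values M_{kℓ} ∈ ℝ for (k,ℓ) ∈ Ω. Let (â, b̂) ∈ ℝ^n × ℝ^m be the minimizer of f(a,b) = ∑_{(k,ℓ)∈Ω} (a_k + b_ℓ − M_{kℓ})² having minimum Euclidean norm among all minimizers. Then for every (i,j) such that u_i and v_j lie in the same connected component of G(Ω), and for any voltage vector v for (i,j): â_i + b̂_j = ∑_{(k,ℓ)∈Ω} (v_k − v_{n+ℓ}) M_{kℓ}, i.e. the least squares estimator equals the electrical flow estimator. -/

import Mathlib

/-!
The Laplacian of `G(Ω)` is the sum over observed entries `(k,ℓ)` of the rank-one matrices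
`(e_k − e_{n+ℓ})(e_k − e_{n+ℓ})ᵀ`. Testing `L v = e_i − e_{n+j}` against `x = (a, −b)` therefore
gives `∑_{(k,ℓ)∈Ω} (v_k − v_{n+ℓ})(a_k + b_ℓ) = a_i + b_j`: the electrical flow estimator is exact
on every matrix of the form `a_k + b_ℓ`, in particular on `â_k + b̂_ℓ`. What remains is the sum of
`(v_k − v_{n+ℓ})` against the residual `â_k + b̂_ℓ − M_{kℓ}`, which vanishes because the residual of a
least squares minimizer is orthogonal to every direction `α_k + β_ℓ`.
-/

open Finset

/-- The bipartite observation graph `G(Ω)`: row vertices `Sum.inl k` and column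
vertices `Sum.inr ℓ`, with an edge iff `(k,ℓ) ∈ Ω`. -/
def bipGraph {n m : ℕ} (Ω : Finset (Fin n × Fin m)) : SimpleGraph (Fin n ⊕ Fin m) where
  Adj x y :=
    match x, y with
    | Sum.inl k, Sum.inr l => (k, l) ∈ Ω
    | Sum.inr l, Sum.inl k => (k, l) ∈ Ω
    | _, _ => False
  symm := ⟨by
    rintro (k | k) (l | l) h
    · exact h.elim
    · exact h
    · exact h
    · exact h.elim⟩
  loopless := ⟨by rintro (k | k) h <;> exact h⟩

/-- The graph Laplacian `L = D − A` of `G(Ω)`, with vertices ordered rows then columns. -/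
noncomputable def lap {n m : ℕ} (Ω : Finset (Fin n × Fin m)) :
    Matrix (Fin n ⊕ Fin m) (Fin n ⊕ Fin m) ℝ :=
  fun x y =>
    (if x = y then
      (match x with
       | Sum.inl k => ((Ω.filter fun p => p.1 = k).card : ℝ)
       | Sum.inr l => ((Ω.filter fun p => p.2 = l).card : ℝ))
     else 0)
    -
    (match x, y with
     | Sum.inl k, Sum.inr l => if (k, l) ∈ Ω then (1 : ℝ) else 0
     | Sum.inr l, Sum.inl k => if (k, l) ∈ Ω then (1 : ℝ) else 0
     | _, _ => 0)

/-- The vector `e_i − e_{n+j}` of `ℝ^{n+m}`. -/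
def stdVec {n m : ℕ} (i : Fin n) (j : Fin m) : (Fin n ⊕ Fin m) → ℝ :=
  fun x => (if x = Sum.inl i then 1 else 0) - (if x = Sum.inr j then 1 else 0)

/-- `v` is a voltage vector for the pair `(i,j)`: `L v = e_i − e_{n+j}`.
The effective resistance `R(u_i, v_j)` is `(e_i − e_{n+j})ᵀ v = v_i − v_{n+j}`
for any voltage vector `v`. -/
noncomputable def IsVoltage {n m : ℕ} (Ω : Finset (Fin n × Fin m)) (i : Fin n) (j : Fin m)
    (v : (Fin n ⊕ Fin m) → ℝ) : Prop :=
  (lap Ω).mulVec v = stdVec i j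

/-- The least squares objective `f(a,b) = ∑_{(k,ℓ)∈Ω} (a_k + b_ℓ − M_{kℓ})²`. -/
def lseObj {n m : ℕ} (Ω : Finset (Fin n × Fin m)) (M : Fin n × Fin m → ℝ)
    (a : Fin n → ℝ) (b : Fin m → ℝ) : ℝ :=
  ∑ p ∈ Ω, (a p.1 + b p.2 - M p) ^ 2

open Matrix

lemma lap_eq_sum_vecMulVec {n m : ℕ} (Ω : Finset (Fin n × Fin m)) :
    lap Ω = ∑ p ∈ Ω, vecMulVec (stdVec p.1 p.2) (stdVec p.1 p.2) := by
  ext (k | l) (k' | l') <;> unfold lap <;>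
    simp only [stdVec, Matrix.sum_apply, vecMulVec_apply, natCast_card_filter,
      Sum.inl.injEq, Sum.inr.injEq, reduceCtorEq, if_false, sub_zero, zero_sub]
  · by_cases h : k = k'
    · subst h; rw [if_pos rfl]; exact sum_congr rfl fun p _ => by grind
    · rw [if_neg h]; exact (sum_eq_zero fun p _ => by grind).symm
  · rw [← sum_ite_eq' Ω (k, l') fun _ => (1 : ℝ), ← sum_neg_distrib]
    exact sum_congr rfl fun p _ => by grind
  · rw [← sum_ite_eq' Ω (k', l) fun _ => (1 : ℝ), ← sum_neg_distrib]
    exact sum_congr rfl fun p _ => by grind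
  · by_cases h : l = l'
    · subst h; rw [if_pos rfl]; exact sum_congr rfl fun p _ => by grind
    · rw [if_neg h]; exact (sum_eq_zero fun p _ => by grind).symm

lemma dotProduct_stdVec {n m : ℕ} (x : Fin n ⊕ Fin m → ℝ) (i : Fin n) (j : Fin m) :
    x ⬝ᵥ stdVec i j = x (Sum.inl i) - x (Sum.inr j) := by
  simp [dotProduct, stdVec, mul_sub, sum_sub_distrib]

lemma dotProduct_lap_mulVec {n m : ℕ} (Ω : Finset (Fin n × Fin m)) (x v : Fin n ⊕ Fin m → ℝ) :
    x ⬝ᵥ (lap Ω *ᵥ v) =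
      ∑ p ∈ Ω, (x (Sum.inl p.1) - x (Sum.inr p.2)) * (v (Sum.inl p.1) - v (Sum.inr p.2)) := by
  simp only [lap_eq_sum_vecMulVec, sum_mulVec, vecMulVec_mulVec, op_smul_eq_smul, dotProduct_sum,
    dotProduct_smul, smul_eq_mul, dotProduct_stdVec, dotProduct_comm _ v]
  exact sum_congr rfl fun p _ => mul_comm _ _

lemma IsVoltage.sum_mul_add {n m : ℕ} {Ω : Finset (Fin n × Fin m)} {i : Fin n} {j : Fin m}
    {v : Fin n ⊕ Fin m → ℝ} (hv : IsVoltage Ω i j v) (a : Fin n → ℝ) (b : Fin m → ℝ) :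
    ∑ p ∈ Ω, (v (Sum.inl p.1) - v (Sum.inr p.2)) * (a p.1 + b p.2) = a i + b j := by
  have h := dotProduct_lap_mulVec Ω (Sum.elim a (-b)) v
  rw [show lap Ω *ᵥ v = stdVec i j from hv, dotProduct_stdVec] at h
  simpa [sub_neg_eq_add, mul_comm] using h.symm

lemma Finset.sum_mul_eq_zero_of_forall_sum_sq_le {ι : Type*} (s : Finset ι) (r u : ι → ℝ)
    (h : ∀ t : ℝ, ∑ x ∈ s, r x ^ 2 ≤ ∑ x ∈ s, (r x + t * u x) ^ 2) :
    ∑ x ∈ s, u x * r x = 0 := by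
  have hquad (t : ℝ) :
      0 ≤ (∑ x ∈ s, u x ^ 2) * (t * t) + 2 * (∑ x ∈ s, u x * r x) * t + 0 := by
    have hexpand : ∑ x ∈ s, (r x + t * u x) ^ 2 = ∑ x ∈ s, r x ^ 2 +
        ((∑ x ∈ s, u x ^ 2) * (t * t) + 2 * (∑ x ∈ s, u x * r x) * t + 0) := by
      simp only [add_zero, sum_mul, mul_sum, ← sum_add_distrib]
      exact sum_congr rfl fun x _ => by ring
    linarith [h t]
  have hdisc := discrim_le_zero hquad
  rw [discrim, mul_zero, sub_zero] at hdisc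
  nlinarith [sq_nonneg (∑ x ∈ s, u x * r x)]

lemma sum_mul_residual_eq_zero_of_lseObj_le {n m : ℕ} {Ω : Finset (Fin n × Fin m)}
    {M : Fin n × Fin m → ℝ} {ahat : Fin n → ℝ} {bhat : Fin m → ℝ}
    (hmin : ∀ a b, lseObj Ω M ahat bhat ≤ lseObj Ω M a b) (α : Fin n → ℝ) (β : Fin m → ℝ) :
    ∑ p ∈ Ω, (α p.1 + β p.2) * (ahat p.1 + bhat p.2 - M p) = 0 :=
  Finset.sum_mul_eq_zero_of_forall_sum_sq_le Ω _ _ fun t =>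
    (hmin (ahat + t • α) (bhat + t • β)).trans_eq <| sum_congr rfl fun p _ => by
      simp only [Pi.add_apply, Pi.smul_apply, smul_eq_mul]; ring

theorem stmt7_general {n m : ℕ} (Ω : Finset (Fin n × Fin m)) (M : Fin n × Fin m → ℝ)
    (ahat : Fin n → ℝ) (bhat : Fin m → ℝ)
    (hmin : ∀ (a : Fin n → ℝ) (b : Fin m → ℝ), lseObj Ω M ahat bhat ≤ lseObj Ω M a b)
    (i : Fin n) (j : Fin m)
    (v : (Fin n ⊕ Fin m) → ℝ) (hv : IsVoltage Ω i j v) :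
    ahat i + bhat j = ∑ p ∈ Ω, (v (Sum.inl p.1) - v (Sum.inr p.2)) * M p := by
  have horth := sum_mul_residual_eq_zero_of_lseObj_le hmin (fun k => v (Sum.inl k))
    (fun l => -v (Sum.inr l))
  simp only [← sub_eq_add_neg] at horth
  calc ahat i + bhat j
      = ∑ p ∈ Ω, (v (Sum.inl p.1) - v (Sum.inr p.2)) * (ahat p.1 + bhat p.2) :=
        (hv.sum_mul_add ahat bhat).symm
    _ = ∑ p ∈ Ω, (v (Sum.inl p.1) - v (Sum.inr p.2)) * (ahat p.1 + bhat p.2) -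
          ∑ p ∈ Ω, (v (Sum.inl p.1) - v (Sum.inr p.2)) * (ahat p.1 + bhat p.2 - M p) := by
        rw [horth, sub_zero]
    _ = ∑ p ∈ Ω, (v (Sum.inl p.1) - v (Sum.inr p.2)) * M p := by
        rw [← sum_sub_distrib]
        exact sum_congr rfl fun p _ => by ring

theorem stmt7 {n m : ℕ} (Ω : Finset (Fin n × Fin m)) (M : Fin n × Fin m → ℝ)
    (ahat : Fin n → ℝ) (bhat : Fin m → ℝ)
    (hmin : ∀ (a : Fin n → ℝ) (b : Fin m → ℝ), lseObj Ω M ahat bhat ≤ lseObj Ω M a b)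
    (hnorm : ∀ (a : Fin n → ℝ) (b : Fin m → ℝ), lseObj Ω M a b = lseObj Ω M ahat bhat →
      (∑ k, ahat k ^ 2) + (∑ l, bhat l ^ 2) ≤ (∑ k, a k ^ 2) + (∑ l, b l ^ 2))
    (i : Fin n) (j : Fin m)
    (hconn : (bipGraph Ω).Reachable (Sum.inl i) (Sum.inr j))
    (v : (Fin n ⊕ Fin m) → ℝ) (hv : IsVoltage Ω i j v) :
    ahat i + bhat j = ∑ p ∈ Ω, (v (Sum.inl p.1) - v (Sum.inr p.2)) * M p :=
  stmt7_general Ω M ahat bhat hmin i j v hv
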